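/- Let D be a positive integer, μ ∈ ℝ^D, σ ∈ ℝ^D with σ_d > 0, and let s be a random vector in ℝ^D with independent coordinates s_d ~ N(μ_d, σ_d²). For τ ∈ ℝ^D define k(τ) = exp(−2π² Σ_{d=1}^{D} σ_d² τ_d²) cos(2π ⟨μ, τ⟩). Then Var[cos(2π ⟨s, τ⟩)] = (1 + k(2τ))/2 − k(τ)². -/

import Mathlib

/-!
Since `cos² x = (1 + cos 2x) / 2`, the variance of `cos(2π⟨s, τ⟩)` is determined by the means of
`cos(2π⟨s, τ⟩)` and `cos(2π⟨s, 2τ⟩)`. Each such mean is the real part of the characteristic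
function of the product Gaussian measure, which factors over the independent coordinates into
one-dimensional Gaussian characteristic functions `exp(i t μ_d − σ_d² t² / 2)`; the result is
exactly `k(τ)`, resp. `k(2τ)`.
-/

open MeasureTheory ProbabilityTheory Real
open scoped NNReal ENNReal InnerProductSpace

/-- One SM kernel component `k(τ) = exp(−2π² Σ_d σ_d² τ_d²) cos(2π ⟨μ, τ⟩)`. -/
noncomputable def kGauss {D : ℕ} (μ σ : Fin D → ℝ) (τ : Fin D → ℝ) : ℝ :=
  Real.exp (-2 * π ^ 2 * ∑ d, σ d ^ 2 * τ d ^ 2) * Real.cos (2 * π * ∑ d, μ d * τ d)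

theorem integral_cos_inner_eq_re_charFun {E : Type*} [NormedAddCommGroup E]
    [InnerProductSpace ℝ E] [MeasurableSpace E] [OpensMeasurableSpace E] (μ : Measure E)
    [IsFiniteMeasure μ] (t : E) :
    ∫ x, Real.cos ⟪x, t⟫_ℝ ∂μ = (charFun μ t).re := by
  rw [charFun_eq_integral_innerProbChar, ← RCLike.re_to_complex,
    ← integral_re ((BoundedContinuousFunction.innerProbChar t).integrable μ)]
  simp [BoundedContinuousFunction.innerProbChar_apply, Complex.exp_ofReal_mul_I_re]

theorem integral_cos_sum_mul_pi_gaussianReal {ι : Type*} [Fintype ι] (μ : ι → ℝ)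
    (v : ι → ℝ≥0) (t : ι → ℝ) :
    ∫ s, Real.cos (∑ i, s i * t i) ∂(Measure.pi fun i => gaussianReal (μ i) (v i)) =
      Real.exp (-(∑ i, v i * t i ^ 2) / 2) * Real.cos (∑ i, μ i * t i) := by
  have hmap : ∫ s, Real.cos (∑ i, s i * t i) ∂(Measure.pi fun i => gaussianReal (μ i) (v i)) =
      ∫ x, Real.cos ⟪x, WithLp.toLp 2 t⟫_ℝ
        ∂((Measure.pi fun i => gaussianReal (μ i) (v i)).map (WithLp.toLp 2)) := by
    rw [integral_map (by fun_prop) (by fun_prop)]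
    simp [PiLp.inner_apply, mul_comm]
  rw [hmap, integral_cos_inner_eq_re_charFun, charFun_pi]
  simp [charFun_gaussianReal, ← Complex.exp_sum, Complex.exp_re, ← Complex.ofReal_pow, neg_div,
    Finset.sum_div, mul_comm]

theorem variance_cos {Ω : Type*} [MeasurableSpace Ω] {P : Measure Ω} [IsProbabilityMeasure P]
    {g : Ω → ℝ} (hg : AEMeasurable g P) :
    variance (fun ω => Real.cos (g ω)) P =
      (1 + ∫ ω, Real.cos (2 * g ω) ∂P) / 2 - (∫ ω, Real.cos (g ω) ∂P) ^ 2 := by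
  have hcos_memLp (c : ℝ) (p : ℝ≥0∞) : MemLp (fun ω => Real.cos (c * g ω)) p P :=
    .of_bound
      (Real.continuous_cos.measurable.comp_aemeasurable (hg.const_mul c)).aestronglyMeasurable 1
      (.of_forall fun ω => by simpa using Real.abs_cos_le_one _)
  have hcos_int (c : ℝ) : Integrable (fun ω => Real.cos (c * g ω)) P :=
    memLp_one_iff_integrable.1 (hcos_memLp c 1)
  have hmemLp : MemLp (fun ω => Real.cos (g ω)) 2 P := by simpa using hcos_memLp 1 2
  have hsq : P[(fun ω => Real.cos (g ω)) ^ 2] = (1 + ∫ ω, Real.cos (2 * g ω) ∂P) / 2 := by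
    simp only [Pi.pow_apply, Real.cos_sq]
    rw [integral_add (integrable_const _) ((hcos_int 2).div_const 2), integral_const,
      integral_div]
    simp only [probReal_univ, one_div, smul_eq_mul, one_mul]
    ring
  rw [variance_eq_sub hmemLp, hsq]

theorem integral_cos_pi_gaussianReal_eq_kGauss {D : ℕ} (μ σ : Fin D → ℝ) (v : Fin D → ℝ≥0)
    (hv : ∀ d, (v d : ℝ) = σ d ^ 2) (τ : Fin D → ℝ) :
    ∫ s, Real.cos (2 * π * ∑ d, s d * τ d) ∂(Measure.pi fun d => gaussianReal (μ d) (v d)) =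
      kGauss μ σ τ := by
  have hscale (x : Fin D → ℝ) : 2 * π * ∑ d, x d * τ d = ∑ d, x d * (2 * π * τ d) := by
    rw [Finset.mul_sum]
    exact Finset.sum_congr rfl fun _ _ => by ring
  simp_rw [kGauss, hscale, integral_cos_sum_mul_pi_gaussianReal, hv]
  congr 2
  rw [Finset.mul_sum, neg_div, Finset.sum_div, ← Finset.sum_neg_distrib]
  exact Finset.sum_congr rfl fun _ _ => by ring

theorem variance_cos_gaussian_general (D : ℕ) (μ σ : Fin D → ℝ) (τ : Fin D → ℝ) :
    ProbabilityTheory.variance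
        (fun s : Fin D → ℝ => Real.cos (2 * π * ∑ d, s d * τ d))
        (Measure.pi fun d => gaussianReal (μ d) ⟨σ d ^ 2, sq_nonneg _⟩) =
      (1 + kGauss μ σ (2 • τ)) / 2 - kGauss μ σ τ ^ 2 := by
  -- `⟨σ d ^ 2, _⟩` elaborates to a `Subtype.mk` whose type is not reducibly `ℝ≥0`, so instance
  -- search and `simp` cannot work under this measure; the instance is supplied by hand and the
  -- Gaussian computation is done for an abstract variance vector `v`.
  have := @Measure.pi.instIsProbabilityMeasure _ _ _ _ _ fun d =>
    instIsProbabilityMeasureGaussianReal (μ d) ⟨σ d ^ 2, sq_nonneg _⟩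
  have hk := integral_cos_pi_gaussianReal_eq_kGauss μ σ (fun d => ⟨σ d ^ 2, sq_nonneg _⟩)
    (fun _ => rfl)
  have hmeas : Measurable fun s : Fin D → ℝ => 2 * π * ∑ d, s d * τ d := by fun_prop
  rw [variance_cos hmeas.aemeasurable, hk, ← hk (2 • τ)]
  congr 4 with s
  simp only [Pi.smul_apply, Finset.mul_sum]
  exact congrArg Real.cos (Finset.sum_congr rfl fun _ _ => by ring)

/-- For a random vector `s` in `ℝ^D` with independent coordinates `s d ~ N(μ d, (σ d)^2)`,
`Var[cos(2π ⟨s, τ⟩)] = (1 + k(2τ))/2 − k(τ)²`. -/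
theorem variance_cos_gaussian (D : ℕ) (hD : 0 < D) (μ σ : Fin D → ℝ)
    (hσ : ∀ d, 0 < σ d) (τ : Fin D → ℝ) :
    ProbabilityTheory.variance
        (fun s : Fin D → ℝ => Real.cos (2 * π * ∑ d, s d * τ d))
        (Measure.pi fun d => gaussianReal (μ d) ⟨σ d ^ 2, sq_nonneg _⟩) =
      (1 + kGauss μ σ (2 • τ)) / 2 - kGauss μ σ τ ^ 2 :=
  variance_cos_gaussian_general D μ σ τ
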